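/- The subspace V₁ spanned by X₁ = (1/√(-p)) ∂ₓ and X₅ = (x/√(-p)) ∂ₓ + 2√(-p) ∂ₚ is an abelian ideal of the 5-dimensional Lie algebra V spanned by X₁,...,X₅ on O = {p < 0}. -/

import Mathlib

open Real

/-- The half-plane `O = {(x,p) : p < 0}`. -/
def O : Set (ℝ × ℝ) := {z | z.2 < 0}

/-- Lie bracket of vector fields on `ℝ²`: `[V,W] = DW·V - DV·W`. -/
noncomputable def bracket (V W : ℝ × ℝ → ℝ × ℝ) (z : ℝ × ℝ) : ℝ × ℝ :=
  fderiv ℝ W z (V z) - fderiv ℝ V z (W z)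

noncomputable def X₁ : ℝ × ℝ → ℝ × ℝ := fun z => (1 / Real.sqrt (-z.2), 0)
def X₂ : ℝ × ℝ → ℝ × ℝ := fun _ => (1, 0)
def X₃ : ℝ × ℝ → ℝ × ℝ := fun z => (z.1, -z.2)
def X₄ : ℝ × ℝ → ℝ × ℝ := fun z => (z.1 ^ 2, -2 * z.1 * z.2)
noncomputable def X₅ : ℝ × ℝ → ℝ × ℝ :=
  fun z => (z.1 / Real.sqrt (-z.2), 2 * Real.sqrt (-z.2))

noncomputable def XF : Fin 5 → (ℝ × ℝ → ℝ × ℝ) := ![X₁, X₂, X₃, X₄, X₅]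

/-!
In the coordinates `x` and `s = √(-p)`, so that `p = -s²`, every field is rational in `(x, s)`,
and the brackets with the generators of `V₁` come out as
`[X₁, X₅] = 0`, `[X₂, X₁] = 0`, `[X₂, X₅] = X₁`, `[X₃, X₁] = -X₁/2`, `[X₃, X₅] = X₅/2`,
`[X₄, X₁] = -X₅` and `[X₄, X₅] = 0`.
-/

open ContinuousLinearMap

noncomputable def jacobian (a b c d : ℝ) : ℝ × ℝ →L[ℝ] ℝ × ℝ :=
  (a • fst ℝ ℝ ℝ + b • snd ℝ ℝ ℝ).prod (c • fst ℝ ℝ ℝ + d • snd ℝ ℝ ℝ)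

@[simp]
lemma jacobian_apply (a b c d : ℝ) (v : ℝ × ℝ) :
    jacobian a b c d v = (a * v.1 + b * v.2, c * v.1 + d * v.2) := rfl

lemma bracket_eq_of_hasFDerivAt {V W : ℝ × ℝ → ℝ × ℝ} {z : ℝ × ℝ} {a b c d a' b' c' d' : ℝ}
    (hV : HasFDerivAt V (jacobian a b c d) z) (hW : HasFDerivAt W (jacobian a' b' c' d') z) :
    bracket V W z =
      (a' * (V z).1 + b' * (V z).2 - (a * (W z).1 + b * (W z).2),
        c' * (V z).1 + d' * (V z).2 - (c * (W z).1 + d * (W z).2)) := by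
  rw [bracket, hV.fderiv, hW.fderiv, jacobian_apply, jacobian_apply, Prod.mk_sub_mk]

lemma bracket_self (V : ℝ × ℝ → ℝ × ℝ) (z : ℝ × ℝ) : bracket V V z = 0 := sub_self _

lemma bracket_swap (V W : ℝ × ℝ → ℝ × ℝ) (z : ℝ × ℝ) : bracket W V z = -bracket V W z :=
  (neg_sub _ _).symm

lemma HasFDerivAt.prodMk_jacobian {f g : ℝ × ℝ → ℝ} {z : ℝ × ℝ} {a b c d : ℝ}
    (hf : HasFDerivAt f (a • fst ℝ ℝ ℝ + b • snd ℝ ℝ ℝ) z)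
    (hg : HasFDerivAt g (c • fst ℝ ℝ ℝ + d • snd ℝ ℝ ℝ) z) :
    HasFDerivAt (fun z => (f z, g z)) (jacobian a b c d) z :=
  hf.prodMk hg

lemma hasDerivAt_sqrt_neg {p : ℝ} (hp : p < 0) :
    HasDerivAt (fun q => √(-q)) (-1 / (2 * √(-p))) p := by
  simpa [neg_div] using ((hasDerivAt_id p).neg).sqrt (by simpa using hp.ne)

lemma hasDerivAt_inv_sqrt_neg {p : ℝ} (hp : p < 0) :
    HasDerivAt (fun q => 1 / √(-q)) (1 / (2 * √(-p) ^ 3)) p := by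
  have hs : √(-p) ≠ 0 := (sqrt_pos.mpr (neg_pos.mpr hp)).ne'
  simp only [one_div]
  exact ((hasDerivAt_sqrt_neg hp).fun_inv hs).congr_deriv (by field_simp)

lemma hasFDerivAt_X₁ {z : ℝ × ℝ} (hz : z ∈ O) :
    HasFDerivAt X₁ (jacobian 0 (1 / (2 * √(-z.2) ^ 3)) 0 0) z := by
  refine HasFDerivAt.prodMk_jacobian ?_ ?_
  · exact ((hasDerivAt_inv_sqrt_neg hz).comp_hasFDerivAt z hasFDerivAt_snd).congr_fderiv
      (by simp)
  · exact (hasFDerivAt_const (0 : ℝ) z).congr_fderiv (by simp)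

lemma hasFDerivAt_X₂ (z : ℝ × ℝ) : HasFDerivAt X₂ (jacobian 0 0 0 0) z :=
  (hasFDerivAt_const ((1, 0) : ℝ × ℝ) z).congr_fderiv (by ext <;> simp)

lemma hasFDerivAt_X₃ (z : ℝ × ℝ) : HasFDerivAt X₃ (jacobian 1 0 0 (-1)) z := by
  refine HasFDerivAt.prodMk_jacobian ?_ ?_
  · exact hasFDerivAt_fst.congr_fderiv (by simp)
  · exact (hasFDerivAt_snd (𝕜 := ℝ) (E := ℝ) (F := ℝ) (p := z)).neg.congr_fderiv
      (by ext <;> simp)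

lemma hasFDerivAt_X₄ (z : ℝ × ℝ) :
    HasFDerivAt X₄ (jacobian (2 * z.1) 0 (-2 * z.2) (-2 * z.1)) z := by
  have hx := hasFDerivAt_fst (𝕜 := ℝ) (E := ℝ) (F := ℝ) (p := z)
  have hp := hasFDerivAt_snd (𝕜 := ℝ) (E := ℝ) (F := ℝ) (p := z)
  refine HasFDerivAt.prodMk_jacobian ?_ ?_
  · exact (hx.pow 2).congr_fderiv (by ext <;> simp)
  · exact ((hx.const_mul (-2)).mul hp).congr_fderiv (by ext <;> simp; ring)

lemma hasFDerivAt_X₅ {z : ℝ × ℝ} (hz : z ∈ O) :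
    HasFDerivAt X₅ (jacobian (1 / √(-z.2)) (z.1 / (2 * √(-z.2) ^ 3)) 0 (-1 / √(-z.2))) z := by
  have hx := hasFDerivAt_fst (𝕜 := ℝ) (E := ℝ) (F := ℝ) (p := z)
  have hp := hasFDerivAt_snd (𝕜 := ℝ) (E := ℝ) (F := ℝ) (p := z)
  refine HasFDerivAt.prodMk_jacobian ?_ ?_
  · simp only [div_eq_mul_one_div (_ : ℝ × ℝ).1]
    exact (hx.mul ((hasDerivAt_inv_sqrt_neg hz).comp_hasFDerivAt z hp)).congr_fderiv
      (by ext <;> simp)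
  · exact (((hasDerivAt_sqrt_neg hz).const_mul 2).comp_hasFDerivAt z hp).congr_fderiv
      (by ext <;> simp; ring)

lemma exists_eq_neg_sq_of_mem_O {z : ℝ × ℝ} (hz : z ∈ O) : ∃ x s : ℝ, 0 < s ∧ z = (x, -s ^ 2) :=
  ⟨z.1, √(-z.2), sqrt_pos.mpr (neg_pos.mpr hz),
    by rw [sq_sqrt (neg_nonneg.mpr (le_of_lt hz)), neg_neg]⟩

lemma bracket_X₁_X₅ {z : ℝ × ℝ} (hz : z ∈ O) : bracket X₁ X₅ z = 0 := by
  rw [bracket_eq_of_hasFDerivAt (hasFDerivAt_X₁ hz) (hasFDerivAt_X₅ hz)]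
  obtain ⟨x, s, hs, rfl⟩ := exists_eq_neg_sq_of_mem_O hz
  simp only [X₁, X₅, neg_neg, sqrt_sq hs.le, Prod.mk_eq_zero]
  constructor <;> field_simp <;> ring

lemma bracket_X₂_X₁ {z : ℝ × ℝ} (hz : z ∈ O) : bracket X₂ X₁ z = 0 := by
  rw [bracket_eq_of_hasFDerivAt (hasFDerivAt_X₂ z) (hasFDerivAt_X₁ hz)]
  simp [X₁, X₂]

lemma bracket_X₂_X₅ {z : ℝ × ℝ} (hz : z ∈ O) : bracket X₂ X₅ z = X₁ z := by
  rw [bracket_eq_of_hasFDerivAt (hasFDerivAt_X₂ z) (hasFDerivAt_X₅ hz)]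
  simp [X₁, X₂, X₅]

lemma bracket_X₃_X₁ {z : ℝ × ℝ} (hz : z ∈ O) : bracket X₃ X₁ z = (-1 / 2 : ℝ) • X₁ z := by
  rw [bracket_eq_of_hasFDerivAt (hasFDerivAt_X₃ z) (hasFDerivAt_X₁ hz)]
  obtain ⟨x, s, hs, rfl⟩ := exists_eq_neg_sq_of_mem_O hz
  simp only [X₁, X₃, neg_neg, sqrt_sq hs.le, Prod.smul_mk, smul_eq_mul, Prod.mk.injEq]
  constructor <;> field_simp <;> ring

lemma bracket_X₃_X₅ {z : ℝ × ℝ} (hz : z ∈ O) : bracket X₃ X₅ z = (1 / 2 : ℝ) • X₅ z := by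
  rw [bracket_eq_of_hasFDerivAt (hasFDerivAt_X₃ z) (hasFDerivAt_X₅ hz)]
  obtain ⟨x, s, hs, rfl⟩ := exists_eq_neg_sq_of_mem_O hz
  simp only [X₃, X₅, neg_neg, sqrt_sq hs.le, Prod.smul_mk, smul_eq_mul, Prod.mk.injEq]
  constructor <;> field_simp <;> ring

lemma bracket_X₄_X₁ {z : ℝ × ℝ} (hz : z ∈ O) : bracket X₄ X₁ z = -X₅ z := by
  rw [bracket_eq_of_hasFDerivAt (hasFDerivAt_X₄ z) (hasFDerivAt_X₁ hz)]
  obtain ⟨x, s, hs, rfl⟩ := exists_eq_neg_sq_of_mem_O hz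
  simp only [X₁, X₄, X₅, neg_neg, sqrt_sq hs.le, Prod.neg_mk, Prod.mk.injEq]
  constructor <;> field_simp <;> ring

lemma bracket_X₄_X₅ {z : ℝ × ℝ} (hz : z ∈ O) : bracket X₄ X₅ z = 0 := by
  rw [bracket_eq_of_hasFDerivAt (hasFDerivAt_X₄ z) (hasFDerivAt_X₅ hz)]
  obtain ⟨x, s, hs, rfl⟩ := exists_eq_neg_sq_of_mem_O hz
  simp only [X₄, X₅, neg_neg, sqrt_sq hs.le, Prod.mk_eq_zero]
  constructor <;> field_simp <;> ring

/-- `V₁ = span{X₁,X₅}` is an abelian ideal of the 5-dimensional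
Lie algebra `V = span{X₁,…,X₅}` on `O = {p < 0}`. -/
theorem V1_abelian_ideal :
    (∀ z ∈ O, bracket X₁ X₅ z = 0) ∧
    (∀ i : Fin 5, ∀ j : Fin 5, j = 0 ∨ j = 4 →
      ∃ a b : ℝ, ∀ z ∈ O, bracket (XF i) (XF j) z = a • X₁ z + b • X₅ z) := by
  refine ⟨fun z hz => bracket_X₁_X₅ hz, fun i j hj => ?_⟩
  fin_cases i <;> rcases hj with rfl | rfl
  · exact ⟨0, 0, fun z _ => by simp [XF, bracket_self]⟩
  · exact ⟨0, 0, fun z hz => by simp [XF, bracket_X₁_X₅ hz]⟩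
  · exact ⟨0, 0, fun z hz => by simp [XF, bracket_X₂_X₁ hz]⟩
  · exact ⟨1, 0, fun z hz => by simp [XF, bracket_X₂_X₅ hz]⟩
  · exact ⟨-1 / 2, 0, fun z hz => by simp [XF, bracket_X₃_X₁ hz]⟩
  · exact ⟨0, 1 / 2, fun z hz => by simp [XF, bracket_X₃_X₅ hz]⟩
  · exact ⟨0, -1, fun z hz => by simp [XF, bracket_X₄_X₁ hz]⟩
  · exact ⟨0, 0, fun z hz => by simp [XF, bracket_X₄_X₅ hz]⟩
  · exact ⟨0, 0, fun z hz => by simp [XF, bracket_swap X₁ X₅, bracket_X₁_X₅ hz]⟩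
  · exact ⟨0, 0, fun z _ => by simp [XF, bracket_self]⟩
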